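/- arXiv:2206.12003 — 5 statements merged into one kernel-verified Lean document; each statement's English description precedes it below -/
import Mathlib

section
/- The quantity F1 = (1−δ3δ1x2²)/(1−δ1δ2x3²) is a conserved quantity of the Hirota–Kimura discrete Euler top: if x̃ = f(x,δ) where f is the explicit birational map with x̃1 = (x1+2δ1x2x3+x1(−δ2δ3x1²+δ1δ3x2²+δ1δ2x3²))/Δ, x̃2 = (x2+2δ2x1x3+x2(δ2δ3x1²−δ1δ3x2²+δ1δ2x3²))/Δ, x̃3 = (x3+2δ3x1x2+x3(δ2δ3x1²+δ1δ3x2²−δ1δ2x3²))/Δ, Δ = 1−δ2δ3x1²−δ1δ3x2²−δ1δ2x3²−2δ1δ2δ3x1x2x3, then (1−δ3δ1x̃2²)/(1−δ1δ2x̃3²) = (1−δ3δ1x2²)/(1−δ1δ2x3²). -/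
/-! Each numerator `1 - δᵢδⱼ x̃ₖ²` of the update factors as `(1 - δᵢδⱼ xₖ²) · Q / Δ²`, where
the polynomial `Q = hkFactor` is symmetric under permuting the indices. The common factor `Q / Δ²` cancels in the
ratio, and it is nonzero because the new denominator is. -/

noncomputable def hkDen (d1 d2 d3 x1 x2 x3 : ℝ) : ℝ :=
  1 - d2*d3*x1^2 - d1*d3*x2^2 - d1*d2*x3^2 - 2*d1*d2*d3*x1*x2*x3

noncomputable def hk1 (d1 d2 d3 x1 x2 x3 : ℝ) : ℝ :=
  (x1 + 2*d1*x2*x3 + x1*(-(d2*d3*x1^2) + d1*d3*x2^2 + d1*d2*x3^2)) / hkDen d1 d2 d3 x1 x2 x3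

noncomputable def hk2 (d1 d2 d3 x1 x2 x3 : ℝ) : ℝ :=
  (x2 + 2*d2*x1*x3 + x2*(d2*d3*x1^2 - d1*d3*x2^2 + d1*d2*x3^2)) / hkDen d1 d2 d3 x1 x2 x3

noncomputable def hk3 (d1 d2 d3 x1 x2 x3 : ℝ) : ℝ :=
  (x3 + 2*d3*x1*x2 + x3*(d2*d3*x1^2 + d1*d3*x2^2 - d1*d2*x3^2)) / hkDen d1 d2 d3 x1 x2 x3

section

variable (d1 d2 d3 x1 x2 x3 : ℝ)

def hkFactor : ℝ :=
  1 - 2*d2*d3*x1^2 - 2*d1*d3*x2^2 - 2*d1*d2*x3^2 - 8*d1*d2*d3*x1*x2*x3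
    + d2^2*d3^2*x1^4 + d1^2*d3^2*x2^4 + d1^2*d2^2*x3^4
    - 2*d1*d2*d3^2*x1^2*x2^2 - 2*d1*d2^2*d3*x1^2*x3^2 - 2*d1^2*d2*d3*x2^2*x3^2

variable {d1 d2 d3 x1 x2 x3}

theorem one_sub_hk2_sq (hΔ : hkDen d1 d2 d3 x1 x2 x3 ≠ 0) :
    1 - d3*d1*(hk2 d1 d2 d3 x1 x2 x3)^2
      = (1 - d3*d1*x2^2) * (hkFactor d1 d2 d3 x1 x2 x3 / hkDen d1 d2 d3 x1 x2 x3 ^ 2) := by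
  unfold hk2 hkFactor
  field_simp
  unfold hkDen
  ring

theorem one_sub_hk3_sq (hΔ : hkDen d1 d2 d3 x1 x2 x3 ≠ 0) :
    1 - d1*d2*(hk3 d1 d2 d3 x1 x2 x3)^2
      = (1 - d1*d2*x3^2) * (hkFactor d1 d2 d3 x1 x2 x3 / hkDen d1 d2 d3 x1 x2 x3 ^ 2) := by
  unfold hk3 hkFactor
  field_simp
  unfold hkDen
  ring

end

theorem stmt_1_general (d1 d2 d3 x1 x2 x3 : ℝ)
    (hΔ : hkDen d1 d2 d3 x1 x2 x3 ≠ 0)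
    (hx' : 1 - d1*d2*(hk3 d1 d2 d3 x1 x2 x3)^2 ≠ 0) :
    (1 - d3*d1*(hk2 d1 d2 d3 x1 x2 x3)^2) / (1 - d1*d2*(hk3 d1 d2 d3 x1 x2 x3)^2)
      = (1 - d3*d1*x2^2) / (1 - d1*d2*x3^2) := by
  rw [one_sub_hk3_sq hΔ] at hx' ⊢
  rw [one_sub_hk2_sq hΔ]
  exact mul_div_mul_right _ _ (right_ne_zero_of_mul hx')

theorem stmt_1 (d1 d2 d3 x1 x2 x3 : ℝ)
    (hΔ : hkDen d1 d2 d3 x1 x2 x3 ≠ 0)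
    (hx : 1 - d1*d2*x3^2 ≠ 0)
    (hx' : 1 - d1*d2*(hk3 d1 d2 d3 x1 x2 x3)^2 ≠ 0) :
    (1 - d3*d1*(hk2 d1 d2 d3 x1 x2 x3)^2) / (1 - d1*d2*(hk3 d1 d2 d3 x1 x2 x3)^2)
      = (1 - d3*d1*x2^2) / (1 - d1*d2*x3^2) :=
  stmt_1_general d1 d2 d3 x1 x2 x3 hΔ hx'
end

section
/- The map x̃ = f(x,δ) defined by the explicit rational formulas of the Hirota–Kimura discrete Euler top satisfies the implicit equations of motion: x̃1 − x1 = δ1(x̃2x3 + x2x̃3), x̃2 − x2 = δ2(x̃3x1 + x3x̃1), x̃3 − x3 = δ3(x̃1x2 + x1x̃2). -/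
/-! The equations of motion are linear in `x̃`: they read `A x̃ = x` with
`A = [[1, -δ1 x3, -δ1 x2], [-δ2 x3, 1, -δ2 x1], [-δ3 x2, -δ3 x1, 1]]`, whose determinant is `Δ`,
and the numerators of `x̃1, x̃2, x̃3` are the entries of `adj(A) x`. So after clearing `Δ` the first
equation is a polynomial identity, and the other two are its images under the cyclic shift
`(δ1, δ2, δ3, x1, x2, x3) ↦ (δ2, δ3, δ1, x2, x3, x1)`, which permutes `x̃1 → x̃2 → x̃3 → x̃1`. -/

section

variable (d1 d2 d3 x1 x2 x3 : ℝ)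

lemma hkDen_rotate : hkDen d2 d3 d1 x2 x3 x1 = hkDen d1 d2 d3 x1 x2 x3 := by
  unfold hkDen; ring

lemma hk1_rotate : hk1 d2 d3 d1 x2 x3 x1 = hk2 d1 d2 d3 x1 x2 x3 := by
  rw [hk1, hk2, hkDen_rotate]; ring

lemma hk2_rotate : hk2 d2 d3 d1 x2 x3 x1 = hk3 d1 d2 d3 x1 x2 x3 := by
  rw [hk2, hk3, hkDen_rotate]; ring

lemma hk3_rotate : hk3 d2 d3 d1 x2 x3 x1 = hk1 d1 d2 d3 x1 x2 x3 := by
  rw [hk3, hk1, hkDen_rotate]; ring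

variable {d1 d2 d3 x1 x2 x3}

lemma hk1_sub_eq (hΔ : hkDen d1 d2 d3 x1 x2 x3 ≠ 0) :
    hk1 d1 d2 d3 x1 x2 x3 - x1
      = d1 * (hk2 d1 d2 d3 x1 x2 x3 * x3 + x2 * hk3 d1 d2 d3 x1 x2 x3) := by
  rw [hk1, hk2, hk3]
  field_simp
  unfold hkDen
  ring

lemma hk2_sub_eq (hΔ : hkDen d1 d2 d3 x1 x2 x3 ≠ 0) :
    hk2 d1 d2 d3 x1 x2 x3 - x2
      = d2 * (hk3 d1 d2 d3 x1 x2 x3 * x1 + x3 * hk1 d1 d2 d3 x1 x2 x3) := by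
  have h := hk1_sub_eq (d1 := d2) (d2 := d3) (d3 := d1) (x1 := x2) (x2 := x3) (x3 := x1)
    (by rwa [hkDen_rotate])
  rwa [hk1_rotate d1, hk2_rotate d1, hk3_rotate d1] at h

lemma hk3_sub_eq (hΔ : hkDen d1 d2 d3 x1 x2 x3 ≠ 0) :
    hk3 d1 d2 d3 x1 x2 x3 - x3
      = d3 * (hk1 d1 d2 d3 x1 x2 x3 * x2 + x1 * hk2 d1 d2 d3 x1 x2 x3) := by
  have h := hk2_sub_eq (d1 := d2) (d2 := d3) (d3 := d1) (x1 := x2) (x2 := x3) (x3 := x1)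
    (by rwa [hkDen_rotate])
  rwa [hk1_rotate d1, hk2_rotate d1, hk3_rotate d1] at h

end

theorem stmt_2 (d1 d2 d3 x1 x2 x3 : ℝ)
    (hΔ : hkDen d1 d2 d3 x1 x2 x3 ≠ 0) :
    hk1 d1 d2 d3 x1 x2 x3 - x1
        = d1 * (hk2 d1 d2 d3 x1 x2 x3 * x3 + x2 * hk3 d1 d2 d3 x1 x2 x3) ∧
    hk2 d1 d2 d3 x1 x2 x3 - x2
        = d2 * (hk3 d1 d2 d3 x1 x2 x3 * x1 + x3 * hk1 d1 d2 d3 x1 x2 x3) ∧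
    hk3 d1 d2 d3 x1 x2 x3 - x3
        = d3 * (hk1 d1 d2 d3 x1 x2 x3 * x2 + x1 * hk2 d1 d2 d3 x1 x2 x3) := by
  exact ⟨hk1_sub_eq hΔ, hk2_sub_eq hΔ, hk3_sub_eq hΔ⟩
end

section
/- The map f(·,−δ) is the inverse of f(·,δ): for x with both compositions defined, f(f(x,δ),−δ) = x, where f is the explicit birational solution map of the Hirota–Kimura discrete Euler top. -/
/-! The map `f(·, δ)` solves the Hirota–Kimura system `x̃ᵢ - xᵢ = δᵢ (x̃ⱼ xₖ + xⱼ x̃ₖ)`, which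
is invariant under `(x, x̃, δ) ↦ (x̃, x, -δ)`. For fixed `x` the system is linear in `x̃` with
determinant `Δ(x, δ)`, so when `Δ ≠ 0` its solution is unique. Hence `x` is the solution of
the system with base point `f(x, δ)` and parameter `-δ`, i.e. `f(f(x, δ), -δ) = x`. -/

def IsHKStep (d1 d2 d3 x1 x2 x3 y1 y2 y3 : ℝ) : Prop :=
  y1 - x1 = d1 * (y2 * x3 + x2 * y3) ∧
  y2 - x2 = d2 * (y3 * x1 + x3 * y1) ∧
  y3 - x3 = d3 * (y1 * x2 + x1 * y2)

section

variable {d1 d2 d3 x1 x2 x3 y1 y2 y3 : ℝ}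

theorem IsHKStep.neg_swap (h : IsHKStep d1 d2 d3 x1 x2 x3 y1 y2 y3) :
    IsHKStep (-d1) (-d2) (-d3) y1 y2 y3 x1 x2 x3 := by
  obtain ⟨h1, h2, h3⟩ := h
  exact ⟨by linear_combination -h1, by linear_combination -h2, by linear_combination -h3⟩

theorem isHKStep_hk (hΔ : hkDen d1 d2 d3 x1 x2 x3 ≠ 0) :
    IsHKStep d1 d2 d3 x1 x2 x3
      (hk1 d1 d2 d3 x1 x2 x3) (hk2 d1 d2 d3 x1 x2 x3) (hk3 d1 d2 d3 x1 x2 x3) := by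
  refine ⟨?_, ?_, ?_⟩ <;>
  · simp only [hk1, hk2, hk3]
    field_simp
    rw [hkDen]
    ring

theorem IsHKStep.unique {z1 z2 z3 : ℝ} (hΔ : hkDen d1 d2 d3 x1 x2 x3 ≠ 0)
    (hy : IsHKStep d1 d2 d3 x1 x2 x3 y1 y2 y3) (hz : IsHKStep d1 d2 d3 x1 x2 x3 z1 z2 z3) :
    y1 = z1 ∧ y2 = z2 ∧ y3 = z3 := by
  obtain ⟨hy1, hy2, hy3⟩ := hy
  obtain ⟨hz1, hz2, hz3⟩ := hz
  have e1 : (y1 - z1) - d1*x3*(y2 - z2) - d1*x2*(y3 - z3) = 0 := by linear_combination hy1 - hz1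
  have e2 : -d2*x3*(y1 - z1) + (y2 - z2) - d2*x1*(y3 - z3) = 0 := by linear_combination hy2 - hz2
  have e3 : -d3*x2*(y1 - z1) - d3*x1*(y2 - z2) + (y3 - z3) = 0 := by linear_combination hy3 - hz3
  -- the coefficients below are the rows of the adjugate of the matrix of `e1, e2, e3`,
  -- whose determinant is `hkDen`
  have h1 : hkDen d1 d2 d3 x1 x2 x3 * (y1 - z1) = 0 := by
    rw [hkDen]
    linear_combination (1 - d2*d3*x1^2)*e1 + (d1*x3 + d1*d3*x1*x2)*e2 + (d1*x2 + d1*d2*x1*x3)*e3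
  have h2 : hkDen d1 d2 d3 x1 x2 x3 * (y2 - z2) = 0 := by
    rw [hkDen]
    linear_combination (d2*x3 + d2*d3*x1*x2)*e1 + (1 - d1*d3*x2^2)*e2 + (d2*x1 + d1*d2*x2*x3)*e3
  have h3 : hkDen d1 d2 d3 x1 x2 x3 * (y3 - z3) = 0 := by
    rw [hkDen]
    linear_combination (d3*x2 + d2*d3*x1*x3)*e1 + (d3*x1 + d1*d3*x2*x3)*e2 + (1 - d1*d2*x3^2)*e3
  simp only [mul_eq_zero, hΔ, false_or, sub_eq_zero] at h1 h2 h3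
  exact ⟨h1, h2, h3⟩

end

theorem stmt_3 (d1 d2 d3 x1 x2 x3 : ℝ)
    (hΔ : hkDen d1 d2 d3 x1 x2 x3 ≠ 0)
    (hΔ' : hkDen (-d1) (-d2) (-d3)
        (hk1 d1 d2 d3 x1 x2 x3) (hk2 d1 d2 d3 x1 x2 x3) (hk3 d1 d2 d3 x1 x2 x3) ≠ 0) :
    hk1 (-d1) (-d2) (-d3)
        (hk1 d1 d2 d3 x1 x2 x3) (hk2 d1 d2 d3 x1 x2 x3) (hk3 d1 d2 d3 x1 x2 x3) = x1 ∧
    hk2 (-d1) (-d2) (-d3)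
        (hk1 d1 d2 d3 x1 x2 x3) (hk2 d1 d2 d3 x1 x2 x3) (hk3 d1 d2 d3 x1 x2 x3) = x2 ∧
    hk3 (-d1) (-d2) (-d3)
        (hk1 d1 d2 d3 x1 x2 x3) (hk2 d1 d2 d3 x1 x2 x3) (hk3 d1 d2 d3 x1 x2 x3) = x3 :=
  (isHKStep_hk hΔ').unique hΔ' (isHKStep_hk hΔ).neg_swap
end

section
/- If the starting condition has its third coordinate negated, the discrete Euler top map satisfies f((x1,x2,−x3), δ)_1 = f(x,−δ)_1, f((x1,x2,−x3), δ)_2 = f(x,−δ)_2, and f((x1,x2,−x3), δ)_3 = −f(x,−δ)_3. -/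
/-!
The step sizes enter the numerators and the denominator only through the products `dᵢdⱼ`,
which are even under `d ↦ -d`, and through the odd terms `2dᵢxⱼxₖ` and `2d1d2d3x1x2x3`.
Flipping `x3` together with `d` therefore fixes the denominator and the first two numerators and
negates the third. The two sides are thus equal as rational expressions, so the identities hold
even where the common denominator vanishes and both sides are `0`.
-/

section NegX3

variable (d1 d2 d3 x1 x2 x3 : ℝ)

theorem hkDen_neg_x3 : hkDen d1 d2 d3 x1 x2 (-x3) = hkDen (-d1) (-d2) (-d3) x1 x2 x3 := by
  unfold hkDen; ring

theorem hk1_neg_x3 : hk1 d1 d2 d3 x1 x2 (-x3) = hk1 (-d1) (-d2) (-d3) x1 x2 x3 := by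
  unfold hk1
  rw [hkDen_neg_x3]
  congr 1
  ring

theorem hk2_neg_x3 : hk2 d1 d2 d3 x1 x2 (-x3) = hk2 (-d1) (-d2) (-d3) x1 x2 x3 := by
  unfold hk2
  rw [hkDen_neg_x3]
  congr 1
  ring

theorem hk3_neg_x3 : hk3 d1 d2 d3 x1 x2 (-x3) = -hk3 (-d1) (-d2) (-d3) x1 x2 x3 := by
  unfold hk3
  rw [hkDen_neg_x3, ← neg_div]
  congr 1
  ring

end NegX3

theorem stmt_4_general (d1 d2 d3 x1 x2 x3 : ℝ) :
    hk1 d1 d2 d3 x1 x2 (-x3) = hk1 (-d1) (-d2) (-d3) x1 x2 x3 ∧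
    hk2 d1 d2 d3 x1 x2 (-x3) = hk2 (-d1) (-d2) (-d3) x1 x2 x3 ∧
    hk3 d1 d2 d3 x1 x2 (-x3) = -(hk3 (-d1) (-d2) (-d3) x1 x2 x3) :=
  ⟨hk1_neg_x3 .., hk2_neg_x3 .., hk3_neg_x3 ..⟩

theorem stmt_4 (d1 d2 d3 x1 x2 x3 : ℝ)
    (hΔ : hkDen d1 d2 d3 x1 x2 (-x3) ≠ 0)
    (hΔ' : hkDen (-d1) (-d2) (-d3) x1 x2 x3 ≠ 0) :
    hk1 d1 d2 d3 x1 x2 (-x3) = hk1 (-d1) (-d2) (-d3) x1 x2 x3 ∧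
    hk2 d1 d2 d3 x1 x2 (-x3) = hk2 (-d1) (-d2) (-d3) x1 x2 x3 ∧
    hk3 d1 d2 d3 x1 x2 (-x3) = -(hk3 (-d1) (-d2) (-d3) x1 x2 x3) :=
  stmt_4_general d1 d2 d3 x1 x2 x3
end

section
/- With notation as in the involution on H ∩ C, the cross product d±(x) × d±(x̂) vanishes, where x̂ = x + v(x)·d±(x); i.e., the ruling direction at the image point is parallel to the ruling direction at the original point (same sign choice). -/
/-!
Write `d` for `d±`, with `s = ±√(ABCD)` fixing the sign. Along the line `x + v • d x`, the field
`d` only gets rescaled: `d (x + v • d x) = (1 + ABC v (x₃ + x̂₃)) • d x`. This is a polynomial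
identity modulo `s² = ABCD` and the equation of `H`, and it makes the cross product vanish.
-/

open Matrix

section

variable {R : Type*} [CommRing R]

def ruling (A B C s : R) (x : Fin 3 → R) : Fin 3 → R :=
  ![A*B*C*x 0*x 2 - s*B*x 1, A*B*C*x 1*x 2 + s*A*x 0, -(A*B)*(A*x 0^2 + B*x 1^2)]

theorem ruling_add_smul_ruling {A B C D s : R} (hs : s^2 = A*B*C*D) {x : Fin 3 → R}
    (hx : A*x 0^2 + B*x 1^2 + C*x 2^2 + D = 0) (v : R) :
    ruling A B C s (x + v • ruling A B C s x)
      = (1 + A*B*C*v*(2*x 2 + v * ruling A B C s x 2)) • ruling A B C s x := by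
  ext i
  fin_cases i <;>
    simp only [ruling, Fin.isValue, Fin.zero_eta, Fin.mk_one, Fin.reduceFinMk, Pi.add_apply,
      Pi.smul_apply, smul_eq_mul, cons_val_zero, cons_val_one, cons_val]
  · linear_combination (-(A*B*x 0*v)) * hs + (-(A^2*B^2*C*x 0*v)) * hx
  · linear_combination (-(A*B*x 1*v)) * hs + (-(A^2*B^2*C*x 1*v)) * hx
  · linear_combination (-(A^2*B^2*(A*x 0^2 + B*x 1^2)*v^2)) * hs
      + (-(A^3*B^3*C*(A*x 0^2 + B*x 1^2)*v^2)) * hx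

theorem cross_ruling_add_smul_ruling {A B C D s : R} (hs : s^2 = A*B*C*D) {x : Fin 3 → R}
    (hx : A*x 0^2 + B*x 1^2 + C*x 2^2 + D = 0) (v : R) :
    ruling A B C s x ⨯₃ ruling A B C s (x + v • ruling A B C s x) = 0 := by
  rw [ruling_add_smul_ruling hs hx, map_smul, cross_self, smul_zero]

end

theorem stmt_8_general (A B C D s x1 x2 x3 v : ℝ)
    (hs : s^2 = A*B*C*D)
    (hH : A*x1^2 + B*x2^2 + C*x3^2 + D = 0) :
    -- components of x̂ = x + v·d±(x)
    ∀ y1 y2 y3 : ℝ,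
      y1 = x1 + v*(A*B*C*x1*x3 - s*B*x2) →
      y2 = x2 + v*(A*B*C*x2*x3 + s*A*x1) →
      y3 = x3 + v*(-(A*B)*(A*x1^2 + B*x2^2)) →
      -- cross product d±(x) × d±(x̂) = 0
      (A*B*C*x2*x3 + s*A*x1) * (-(A*B)*(A*y1^2 + B*y2^2))
        - (-(A*B)*(A*x1^2 + B*x2^2)) * (A*B*C*y2*y3 + s*A*y1) = 0 ∧
      (-(A*B)*(A*x1^2 + B*x2^2)) * (A*B*C*y1*y3 - s*B*y2)
        - (A*B*C*x1*x3 - s*B*x2) * (-(A*B)*(A*y1^2 + B*y2^2)) = 0 ∧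
      (A*B*C*x1*x3 - s*B*x2) * (A*B*C*y2*y3 + s*A*y1)
        - (A*B*C*x2*x3 + s*A*x1) * (A*B*C*y1*y3 - s*B*y2) = 0 := by
  rintro y1 y2 y3 rfl rfl rfl
  have h := cross_ruling_add_smul_ruling hs (x := ![x1, x2, x3]) hH v
  simpa [cross_apply, ruling] using h

theorem stmt_8 (A B C D s x1 x2 x3 v : ℝ)
    (hABCD : A*B*C*D ≥ 0) (hs : s^2 = A*B*C*D)
    (hH : A*x1^2 + B*x2^2 + C*x3^2 + D = 0)
    (hH' : A*(x1 + v*(A*B*C*x1*x3 - s*B*x2))^2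
        + B*(x2 + v*(A*B*C*x2*x3 + s*A*x1))^2
        + C*(x3 + v*(-(A*B)*(A*x1^2 + B*x2^2)))^2 + D = 0) :
    -- components of x̂ = x + v·d±(x)
    ∀ y1 y2 y3 : ℝ,
      y1 = x1 + v*(A*B*C*x1*x3 - s*B*x2) →
      y2 = x2 + v*(A*B*C*x2*x3 + s*A*x1) →
      y3 = x3 + v*(-(A*B)*(A*x1^2 + B*x2^2)) →
      -- cross product d±(x) × d±(x̂) = 0
      (A*B*C*x2*x3 + s*A*x1) * (-(A*B)*(A*y1^2 + B*y2^2))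
        - (-(A*B)*(A*x1^2 + B*x2^2)) * (A*B*C*y2*y3 + s*A*y1) = 0 ∧
      (-(A*B)*(A*x1^2 + B*x2^2)) * (A*B*C*y1*y3 - s*B*y2)
        - (A*B*C*x1*x3 - s*B*x2) * (-(A*B)*(A*y1^2 + B*y2^2)) = 0 ∧
      (A*B*C*x1*x3 - s*B*x2) * (A*B*C*y2*y3 + s*A*y1)
        - (A*B*C*x2*x3 + s*A*x1) * (A*B*C*y1*y3 - s*B*y2) = 0 :=
  stmt_8_general A B C D s x1 x2 x3 v hs hH
end
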